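/- arXiv:2308.00621 — 7 statements merged into one kernel-verified Lean document; each statement's English description precedes it below -/
import Mathlib

section
/- Let c > 0 and d ≥ 1 an integer. Suppose f_k : (0,∞) → [0,∞) for k ≥ 0 satisfy f₀(t) = 1 for all t, and f_{k+1}(t) ≤ c ∫₀ᵗ r^{d-1} f_k(t − r) dr for all t > 0 and k ≥ 0. Then for all k ≥ 0 and t > 0, f_k(t) ≤ (c·(d−1)!·t^d)^k / (kd)!. -/
/-!
Induction on `k`. Inserting the bound for `f k` into the recursion leaves the Beta integral
`∫₀ᵗ r^a (t - r)^b dr = a! b! / (a + b + 1)! · t^(a + b + 1)` with `a = d - 1`, `b = k d`, and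
the factorials combine into the bound for `f (k + 1)`. The Beta integral follows by induction
on `b`, integrating by parts to move one power from `t - r` to `r`.
-/

open Set intervalIntegral
open scoped Nat

theorem integral_pow_mul_sub_pow_succ (a b : ℕ) (t : ℝ) :
    ∫ r in (0:ℝ)..t, r ^ a * (t - r) ^ (b + 1)
      = (b + 1) / (a + 1) * ∫ r in (0:ℝ)..t, r ^ (a + 1) * (t - r) ^ b := by
  have hu (x : ℝ) : HasDerivAt (fun r : ℝ => (t - r) ^ (b + 1)) (-((b + 1) * (t - x) ^ b)) x := by
    refine (((hasDerivAt_id x).const_sub t).pow (b + 1)).congr_deriv ?_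
    simp
  have hv (x : ℝ) : HasDerivAt (fun r : ℝ => r ^ (a + 1) / (a + 1)) (x ^ a) x := by
    refine ((hasDerivAt_pow (a + 1) x).div_const ((a : ℝ) + 1)).congr_deriv ?_
    simp [field]
  have parts := integral_mul_deriv_eq_deriv_mul (a := 0) (b := t) (fun x _ => hu x) (fun x _ => hv x)
    (by apply Continuous.intervalIntegrable; fun_prop) (by apply Continuous.intervalIntegrable; fun_prop)
  norm_num at parts
  rw [← integral_const_mul]
  simp only [mul_comm (_ ^ a), parts]
  congr 1 with x
  ring

theorem integral_pow_mul_sub_pow (a b : ℕ) (t : ℝ) :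
    ∫ r in (0:ℝ)..t, r ^ a * (t - r) ^ b = (a ! * b ! / (a + b + 1)! : ℝ) * t ^ (a + b + 1) := by
  induction b generalizing a with
  | zero =>
    simp only [pow_zero, mul_one, integral_pow, Nat.factorial_succ]
    push_cast
    field_simp
    ring
  | succ b ih =>
    rw [integral_pow_mul_sub_pow_succ, ih, show a + 1 + b + 1 = a + (b + 1) + 1 by ring]
    push_cast [Nat.factorial_succ]
    field_simp

theorem integral_le_integral_of_le_Ioo_of_nonneg {f g : ℝ → ℝ} {a b : ℝ} (hab : a ≤ b)
    (hg : IntervalIntegrable g MeasureTheory.volume a b) (hg0 : ∀ x ∈ Icc a b, 0 ≤ g x)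
    (hfg : ∀ x ∈ Ioo a b, f x ≤ g x) : ∫ x in a..b, f x ≤ ∫ x in a..b, g x := by
  -- a non-integrable `f` has integral `0` by convention
  by_cases hf : IntervalIntegrable f MeasureTheory.volume a b
  · exact integral_mono_on_of_le_Ioo hab hf hg hfg
  · rw [integral_undef hf]
    exact integral_nonneg hab hg0

theorem mul_integral_pow_mul_pow_div_factorial (c t : ℝ) {d : ℕ} (hd : 1 ≤ d) (k : ℕ) :
    c * ∫ r in (0:ℝ)..t, r ^ (d - 1) * ((c * (d - 1)! * (t - r) ^ d) ^ k / (k * d)!)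
      = (c * (d - 1)! * t ^ d) ^ (k + 1) / ((k + 1) * d)! := by
  have hexp : d - 1 + k * d + 1 = (k + 1) * d := by
    zify [hd]
    ring
  have integrand (r : ℝ) : r ^ (d - 1) * ((c * (d - 1)! * (t - r) ^ d) ^ k / (k * d)!)
      = (c * (d - 1)!) ^ k / (k * d)! * (r ^ (d - 1) * (t - r) ^ (k * d)) := by
    rw [mul_pow, ← pow_mul, mul_comm d k]
    ring
  simp only [integrand, integral_const_mul, integral_pow_mul_sub_pow, hexp]
  field_simp
  ring

theorem stmt1_general (c : ℝ) (hc : 0 < c) (d : ℕ) (hd : 1 ≤ d)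
    (f : ℕ → ℝ → ℝ)
    (hf0 : ∀ t : ℝ, 0 < t → f 0 t = 1)
    (hrec : ∀ k, ∀ t : ℝ, 0 < t →
      f (k + 1) t ≤ c * ∫ r in (0:ℝ)..t, r ^ (d - 1) * f k (t - r)) :
    ∀ k, ∀ t : ℝ, 0 < t →
      f k t ≤ (c * (Nat.factorial (d - 1) : ℝ) * t ^ d) ^ k / (Nat.factorial (k * d) : ℝ) := by
  intro k
  induction k with
  | zero => intro t ht; simp [hf0 t ht]
  | succ k ih =>
    intro t ht
    calc f (k + 1) t ≤ c * ∫ r in (0:ℝ)..t, r ^ (d - 1) * f k (t - r) := hrec k t ht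
      _ ≤ c * ∫ r in (0:ℝ)..t, r ^ (d - 1) * ((c * (d - 1)! * (t - r) ^ d) ^ k / (k * d)!) := by
        refine mul_le_mul_of_nonneg_left ?_ hc.le
        refine integral_le_integral_of_le_Ioo_of_nonneg ht.le
          (Continuous.intervalIntegrable (by fun_prop) _ _) (fun r hr => ?_) (fun r hr => ?_)
        · have : 0 ≤ t - r := sub_nonneg.2 hr.2
          have : 0 ≤ r := hr.1
          positivity
        · exact mul_le_mul_of_nonneg_left (ih _ (sub_pos.2 hr.2)) (pow_nonneg hr.1.le _)
      _ = _ := mul_integral_pow_mul_pow_div_factorial c t hd k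

/-- If `f 0 ≡ 1` on `(0,∞)` and `f (k+1) t ≤ c ∫₀ᵗ r^(d-1) f k (t-r) dr`,
then `f k t ≤ (c (d-1)! t^d)^k / (kd)!`. -/
theorem stmt1 (c : ℝ) (hc : 0 < c) (d : ℕ) (hd : 1 ≤ d)
    (f : ℕ → ℝ → ℝ)
    (hf0 : ∀ t : ℝ, 0 < t → f 0 t = 1)
    (hfnn : ∀ k, ∀ t : ℝ, 0 < t → 0 ≤ f k t)
    (hrec : ∀ k, ∀ t : ℝ, 0 < t →
      f (k + 1) t ≤ c * ∫ r in (0:ℝ)..t, r ^ (d - 1) * f k (t - r)) :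
    ∀ k, ∀ t : ℝ, 0 < t →
      f k t ≤ (c * (Nat.factorial (d - 1) : ℝ) * t ^ d) ^ k / (Nat.factorial (k * d) : ℝ) :=
  stmt1_general c hc d hd f hf0 hrec
end

section
/- Let d ≥ 1, R > 0, θ ∈ (0,1), and M > 0. Let f be a pseudometric on [−R,R]^d. Suppose that for every integer k ≥ 0, when [−R,R]^d is partitioned into 2^{kd} axis-parallel cubes of side length 2^{−k+1}R, every cube I of this partition satisfies diam(I; f) ≤ (M/2)·(k+1)·(2^{−k}R)^θ·log 2. Then for all x, x' ∈ [−R,R]^d with x ≠ x', one has f(x,x') ≤ M · ‖x−x'‖_∞^θ · log(4R/‖x−x'‖_∞). -/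
/-!
Pick the dyadic scale `k` with `2^{-k}R < ‖x - x'‖_∞ ≤ 2^{-k+1}R`. In each coordinate the two
points lie in the same or in adjacent cells of the scale-`k` grid, so the corner `y` whose
coordinates are the larger of the two left cell endpoints lies both in the cube of `x` and in the
cube of `x'`. The triangle inequality through `y` costs twice the diameter bound at scale `k`,
and `(k + 1) log 2 ≤ log (4R/‖x - x'‖_∞)` by the choice of `k`.
-/

open Set

namespace DyadicGrid

def InCell (a₀ s : ℝ) (m : ℕ) (a : ℝ) : Prop :=
  a₀ + m * s ≤ a ∧ a ≤ a₀ + (m + 1) * s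

/-- The right endpoint `a₀ + n s` is assigned to the last of the `n` cells. -/
noncomputable def cellIndex (a₀ s : ℝ) (n : ℕ) (a : ℝ) : ℕ :=
  min ⌊(a - a₀) / s⌋₊ (n - 1)

variable {a₀ s a b : ℝ} {n m m' : ℕ}

theorem cellIndex_lt (hn : 0 < n) : cellIndex a₀ s n a < n := by
  unfold cellIndex
  omega

theorem inCell_iff (hs : 0 < s) :
    InCell a₀ s m a ↔ (m : ℝ) ≤ (a - a₀) / s ∧ (a - a₀) / s ≤ m + 1 := by
  rw [InCell, le_div_iff₀ hs, div_le_iff₀ hs]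
  constructor <;> rintro ⟨h₁, h₂⟩ <;> constructor <;> linarith

theorem inCell_cellIndex (hs : 0 < s) (hn : 0 < n) (ha : a ∈ Icc a₀ (a₀ + n * s)) :
    InCell a₀ s (cellIndex a₀ s n a) a := by
  set t := (a - a₀) / s
  have ht₀ : 0 ≤ t := div_nonneg (by linarith [ha.1]) hs.le
  have htn : t ≤ n := by rw [div_le_iff₀ hs]; linarith [ha.2]
  rw [inCell_iff hs, cellIndex]
  rcases le_total ⌊t⌋₊ (n - 1) with h | h
  · rw [min_eq_left h]
    exact ⟨Nat.floor_le ht₀, (Nat.lt_floor_add_one t).le⟩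
  · rw [min_eq_right h]
    have hcast : ((n - 1 : ℕ) : ℝ) + 1 = n := by
      rw [Nat.cast_sub (by omega), Nat.cast_one, sub_add_cancel]
    refine ⟨le_trans (by exact_mod_cast h) (Nat.floor_le ht₀), hcast ▸ htn⟩

theorem cellIndex_le_succ (hs : 0 < s) (hb : a₀ ≤ b) (hab : a ≤ b + s) :
    cellIndex a₀ s n a ≤ cellIndex a₀ s n b + 1 := by
  have hfloor : ⌊(a - a₀) / s⌋₊ ≤ ⌊(b - a₀) / s⌋₊ + 1 := by
    rw [← Nat.floor_add_one (div_nonneg (sub_nonneg.2 hb) hs.le)]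
    refine Nat.floor_le_floor ?_
    rw [div_add_one hs.ne', div_le_div_iff_of_pos_right hs]
    linarith
  unfold cellIndex
  omega

/-- The left endpoint of the higher of two cells that are equal or adjacent lies in both. -/
theorem inCell_max (hs : 0 ≤ s) (h : m' ≤ m + 1) : InCell a₀ s m (a₀ + (max m m' : ℕ) * s) := by
  have h₁ : (m : ℝ) ≤ (max m m' : ℕ) := by exact_mod_cast le_max_left m m'
  have h₂ : ((max m m' : ℕ) : ℝ) ≤ m + 1 := by exact_mod_cast max_le (by omega) h
  constructor <;> nlinarith

theorem exists_mem_cells_of_norm_sub_le {ι : Type*} [Fintype ι] (hs : 0 < s) (hn : 0 < n)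
    {x x' : ι → ℝ} (hx : ∀ i, x i ∈ Icc a₀ (a₀ + n * s)) (hx' : ∀ i, x' i ∈ Icc a₀ (a₀ + n * s))
    (hxx' : ‖x - x'‖ ≤ s) :
    ∃ (j j' : ι → Fin n) (y : ι → ℝ),
      (∀ i, InCell a₀ s (j i) (x i)) ∧ (∀ i, InCell a₀ s (j i) (y i)) ∧
      (∀ i, InCell a₀ s (j' i) (y i)) ∧ (∀ i, InCell a₀ s (j' i) (x' i)) := by
  have hcoord (i : ι) : |x i - x' i| ≤ s := (norm_le_pi_norm (x - x') i).trans hxx'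
  have hstep (i : ι) : cellIndex a₀ s n (x' i) ≤ cellIndex a₀ s n (x i) + 1 :=
    cellIndex_le_succ hs (hx i).1 (by linarith [abs_le.1 (hcoord i)])
  have hstep' (i : ι) : cellIndex a₀ s n (x i) ≤ cellIndex a₀ s n (x' i) + 1 :=
    cellIndex_le_succ hs (hx' i).1 (by linarith [abs_le.1 (hcoord i)])
  refine ⟨fun i => ⟨cellIndex a₀ s n (x i), cellIndex_lt hn⟩,
    fun i => ⟨cellIndex a₀ s n (x' i), cellIndex_lt hn⟩,
    fun i => a₀ + (max (cellIndex a₀ s n (x i)) (cellIndex a₀ s n (x' i)) : ℕ) * s,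
    fun i => inCell_cellIndex hs hn (hx i), fun i => inCell_max hs.le (hstep i),
    fun i => ?_, fun i => inCell_cellIndex hs hn (hx' i)⟩
  simpa only [max_comm] using inCell_max (a₀ := a₀) hs.le (hstep' i)

end DyadicGrid

theorem norm_sub_le_two_mul_of_abs_le {ι : Type*} [Fintype ι] [Nonempty ι] {R : ℝ}
    {x x' : ι → ℝ} (hx : ∀ i, |x i| ≤ R) (hx' : ∀ i, |x' i| ≤ R) : ‖x - x'‖ ≤ 2 * R :=
  (pi_norm_le_iff_of_nonempty _).2 fun i => by
    rw [Pi.sub_apply, Real.norm_eq_abs]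
    linarith [abs_sub (x i) (x' i), hx i, hx' i]

theorem exists_dyadic_scale {r R : ℝ} (hr : 0 < r) (hrR : r ≤ 2 * R) :
    ∃ k : ℕ, R / 2 ^ k < r ∧ r ≤ 2 * R / 2 ^ k := by
  obtain ⟨k, hlo, hhi⟩ := exists_nat_pow_near ((one_le_div hr).2 hrR) one_lt_two
  refine ⟨k, ?_, ?_⟩
  · rw [div_lt_iff₀ hr, pow_succ] at hhi
    rw [div_lt_iff₀ (by positivity)]
    linarith
  · rwa [le_div_iff₀ hr, ← le_div_iff₀' (by positivity)] at hlo

theorem mul_succ_mul_rpow_mul_log_two_le {R r θ M : ℝ} {k : ℕ} (hθ : 0 ≤ θ) (hM : 0 ≤ M)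
    (hr : 0 < r) (hlo : R / 2 ^ k < r) (hhi : r ≤ 2 * R / 2 ^ k) :
    M * ((k : ℝ) + 1) * (R / 2 ^ k) ^ θ * Real.log 2 ≤ M * r ^ θ * Real.log (4 * R / r) := by
  have hR : 0 < R := by
    have := hr.trans_le hhi
    rw [div_pos_iff_of_pos_right (by positivity)] at this
    linarith
  have hpow : (R / 2 ^ k) ^ θ ≤ r ^ θ := Real.rpow_le_rpow (by positivity) hlo.le hθ
  have hlog : ((k : ℝ) + 1) * Real.log 2 ≤ Real.log (4 * R / r) := by
    rw [← Nat.cast_succ, ← Real.log_pow]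
    refine Real.log_le_log (by positivity) ?_
    rw [le_div_iff₀ hr, pow_succ]
    rw [le_div_iff₀ (by positivity)] at hhi
    linarith
  calc M * ((k : ℝ) + 1) * (R / 2 ^ k) ^ θ * Real.log 2
      = M * ((R / 2 ^ k) ^ θ * (((k : ℝ) + 1) * Real.log 2)) := by ring
    _ ≤ M * (r ^ θ * Real.log (4 * R / r)) := by
        gcongr
    _ = M * r ^ θ * Real.log (4 * R / r) := by ring

theorem stmt5_general (d : ℕ) (R θ M : ℝ)
    (hθ : θ ∈ Set.Ioo (0:ℝ) 1) (hM : 0 < M)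
    (f : (Fin d → ℝ) → (Fin d → ℝ) → ℝ)
    (htri : ∀ x y z, f x z ≤ f x y + f y z)
    (hcube : ∀ k : ℕ, ∀ j : Fin d → Fin (2 ^ k), ∀ u v : Fin d → ℝ,
      (∀ i, -R + ((j i : ℕ) : ℝ) * (2 * R / 2 ^ k) ≤ u i ∧
            u i ≤ -R + (((j i : ℕ) : ℝ) + 1) * (2 * R / 2 ^ k)) →
      (∀ i, -R + ((j i : ℕ) : ℝ) * (2 * R / 2 ^ k) ≤ v i ∧
            v i ≤ -R + (((j i : ℕ) : ℝ) + 1) * (2 * R / 2 ^ k)) →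
      f u v ≤ (M / 2) * ((k : ℝ) + 1) * (R / 2 ^ k) ^ θ * Real.log 2) :
    ∀ x x' : Fin d → ℝ, (∀ i, |x i| ≤ R) → (∀ i, |x' i| ≤ R) → x ≠ x' →
      f x x' ≤ M * ‖x - x'‖ ^ θ * Real.log (4 * R / ‖x - x'‖) := by
  intro x x' hx hx' hne
  obtain ⟨i₀, -⟩ := Function.ne_iff.1 hne
  have : Nonempty (Fin d) := ⟨i₀⟩
  have hr : 0 < ‖x - x'‖ := norm_pos_iff.2 (sub_ne_zero.2 hne)
  obtain ⟨k, hlo, hhi⟩ := exists_dyadic_scale hr (norm_sub_le_two_mul_of_abs_le hx hx')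
  have hs : 0 < 2 * R / 2 ^ k := hr.trans_le hhi
  have hgrid : -R + ((2 ^ k : ℕ) : ℝ) * (2 * R / 2 ^ k) = R := by
    push_cast
    field_simp
    ring
  have hIcc {z : Fin d → ℝ} (hz : ∀ i, |z i| ≤ R) (i : Fin d) :
      z i ∈ Icc (-R) (-R + ((2 ^ k : ℕ) : ℝ) * (2 * R / 2 ^ k)) := by
    rw [hgrid]
    exact abs_le.1 (hz i)
  obtain ⟨j, j', y, hxj, hyj, hyj', hx'j'⟩ :=
    DyadicGrid.exists_mem_cells_of_norm_sub_le hs (by positivity) (hIcc hx) (hIcc hx') hhi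
  calc f x x' ≤ f x y + f y x' := htri x y x'
    _ ≤ M * ((k : ℝ) + 1) * (R / 2 ^ k) ^ θ * Real.log 2 := by
        linarith [hcube k j x y hxj hyj, hcube k j' y x' hyj' hx'j']
    _ ≤ M * ‖x - x'‖ ^ θ * Real.log (4 * R / ‖x - x'‖) :=
        mul_succ_mul_rpow_mul_log_two_le hθ.1.le hM.le hr hlo hhi

/-- Chaining bound: if on every dyadic-scale cube of the partition of `[-R,R]^d` into
`2^{kd}` cubes of side `2^{-k+1}R` the pseudometric `f` has diameter at most
`(M/2)(k+1)(2^{-k}R)^θ log 2`, then `f(x,x') ≤ M ‖x-x'‖_∞^θ log(4R/‖x-x'‖_∞)`. -/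
theorem stmt5 (d : ℕ) (hd : 1 ≤ d) (R θ M : ℝ) (hR : 0 < R)
    (hθ : θ ∈ Set.Ioo (0:ℝ) 1) (hM : 0 < M)
    (f : (Fin d → ℝ) → (Fin d → ℝ) → ℝ)
    (hnonneg : ∀ x y, 0 ≤ f x y) (hself : ∀ x, f x x = 0)
    (hsymm : ∀ x y, f x y = f y x)
    (htri : ∀ x y z, f x z ≤ f x y + f y z)
    (hcube : ∀ k : ℕ, ∀ j : Fin d → Fin (2 ^ k), ∀ u v : Fin d → ℝ,
      (∀ i, -R + ((j i : ℕ) : ℝ) * (2 * R / 2 ^ k) ≤ u i ∧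
            u i ≤ -R + (((j i : ℕ) : ℝ) + 1) * (2 * R / 2 ^ k)) →
      (∀ i, -R + ((j i : ℕ) : ℝ) * (2 * R / 2 ^ k) ≤ v i ∧
            v i ≤ -R + (((j i : ℕ) : ℝ) + 1) * (2 * R / 2 ^ k)) →
      f u v ≤ (M / 2) * ((k : ℝ) + 1) * (R / 2 ^ k) ^ θ * Real.log 2) :
    ∀ x x' : Fin d → ℝ, (∀ i, |x i| ≤ R) → (∀ i, |x' i| ≤ R) → x ≠ x' →
      f x x' ≤ M * ‖x - x'‖ ^ θ * Real.log (4 * R / ‖x - x'‖) :=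
  stmt5_general d R θ M hθ hM f htri hcube
end

section
/- Let X be a compact metric space and Y a complete metric space. Let (v_n) be a sequence of functions from X to Y, and suppose there exist a function ω : X × X → [0,∞] and a sequence δ_n ≥ 0 such that ω(t,t') → 0 as d_X(t,t') → 0, δ_n → 0, and d_Y(v_n(t), v_n(t')) ≤ ω(t,t') + δ_n for all t,t' ∈ X and all n. Suppose also that for each t ∈ X, the set {v_n(t) : n ∈ ℕ} is relatively compact in Y. Then (v_n) is relatively compact in the space of functions X → Y with the topology of uniform convergence, and every subsequential uniform limit of (v_n) is continuous. -/
open Filter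

/-- A helper estimate: if `ofReal d ≤ ω + ofReal a` with `ω < ofReal ε`, `a < ε`, `0 ≤ a`,
`0 < ε`, then `d < 2 * ε`. -/
lemma stmt6_aux {d a ε : ℝ} {w : ENNReal}
    (h : ENNReal.ofReal d ≤ w + ENNReal.ofReal a)
    (hw : w < ENNReal.ofReal ε) (ha : a < ε) (ha0 : 0 ≤ a) (hε : 0 < ε) :
    d < 2 * ε := by
  have h2 : ENNReal.ofReal a < ENNReal.ofReal ε :=
    (ENNReal.ofReal_lt_ofReal_iff hε).mpr ha
  have h3 : ENNReal.ofReal d < ENNReal.ofReal ε + ENNReal.ofReal ε :=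
    lt_of_le_of_lt h (ENNReal.add_lt_add hw h2)
  rw [← ENNReal.ofReal_add hε.le hε.le] at h3
  have := (ENNReal.ofReal_lt_ofReal_iff (by linarith)).mp h3
  linarith

/-- Generalized Arzelà–Ascoli theorem for possibly discontinuous functions:
if `d_Y(v_n t, v_n t') ≤ ω(t,t') + δ_n` with `ω → 0` as `d_X(t,t') → 0` and `δ_n → 0`,
and each orbit `{v_n t}` is relatively compact, then `(v_n)` is relatively compact in the
uniform-convergence topology and every subsequential uniform limit is continuous. -/
theorem stmt6 {X Y : Type*} [MetricSpace X] [CompactSpace X]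
    [MetricSpace Y] [CompleteSpace Y]
    (v : ℕ → X → Y) (ω : X → X → ENNReal) (δ : ℕ → ℝ)
    (hω : ∀ ε : ENNReal, 0 < ε → ∃ η : ℝ, 0 < η ∧ ∀ t t' : X, dist t t' < η → ω t t' < ε)
    (hδ0 : ∀ n, 0 ≤ δ n) (hδ : Tendsto δ atTop (nhds 0))
    (hbound : ∀ n t t',
      ENNReal.ofReal (dist (v n t) (v n t')) ≤ ω t t' + ENNReal.ofReal (δ n))
    (hpt : ∀ t : X, IsCompact (closure (Set.range fun n => v n t))) :
    IsCompact (closure (Set.range fun n => (UniformFun.ofFun (v n) : UniformFun X Y))) ∧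
    ∀ (g : X → Y) (φ : ℕ → ℕ), StrictMono φ →
      TendstoUniformly (fun k => v (φ k)) g atTop → Continuous g := by
  constructor
  · -- Total boundedness + completeness.
    have htb : TotallyBounded
        (Set.range fun n => (UniformFun.ofFun (v n) : UniformFun X Y)) := by
      rw [(UniformFun.hasBasis_uniformity_of_basis X Y
        Metric.uniformity_basis_dist).totallyBounded_iff]
      intro ε hε
      set ε' : ℝ := ε / 8 with hε'def
      have hε' : 0 < ε' := by positivity
      -- get η from hω
      obtain ⟨η, hη, hηω⟩ := hω (ENNReal.ofReal ε') (by simpa using hε')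
      -- finite η-net of X
      obtain ⟨T, hTfin, hTcov⟩ :=
        Metric.totallyBounded_iff.mp (isCompact_univ (X := X)).totallyBounded η hη
      haveI : Fintype T := hTfin.fintype
      -- the pointwise product set is compact
      set Φ : ℕ → (T → Y) := fun n t => v n t with hΦdef
      have hKc : IsCompact (Set.pi Set.univ fun t : T =>
          closure (Set.range fun n => v n (t : X))) :=
        isCompact_univ_pi fun t => hpt (t : X)
      -- N with δ small beyond N
      obtain ⟨N, hN⟩ := (Metric.tendsto_atTop.mp hδ) ε' hε'
      have hδsmall : ∀ n, N ≤ n → δ n < ε' := by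
        intro n hn
        have := hN n hn
        rw [Real.dist_eq, sub_zero, abs_of_nonneg (hδ0 n)] at this
        exact this
      -- totally bounded subset with centers inside
      have hS : TotallyBounded (Φ '' {n | N ≤ n}) := by
        refine (hKc.totallyBounded).subset ?_
        rintro - ⟨n, -, rfl⟩
        intro t _
        exact subset_closure ⟨n, rfl⟩
      obtain ⟨c, hcsub, hcfin, hccov⟩ := totallyBounded_iff_subset.mp hS
        {p : (T → Y) × (T → Y) | dist p.1 p.2 < ε'} (Metric.dist_mem_uniformity hε')
      -- choose indices for centers
      have hchoice : ∀ y ∈ c, ∃ m, N ≤ m ∧ Φ m = y := by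
        intro y hy
        obtain ⟨m, hm, rfl⟩ := hcsub hy
        exact ⟨m, hm, rfl⟩
      choose! pick hpick1 hpick2 using hchoice
      -- the finite net in function space
      refine ⟨(fun n => (UniformFun.ofFun (v n) : UniformFun X Y)) ''
        (pick '' c ∪ {n | n < N}), ?_, ?_⟩
      · exact Set.Finite.image _ ((hcfin.image pick).union (Set.finite_Iio N))
      · rintro - ⟨n, rfl⟩
        rcases lt_or_ge n N with hn | hn
        · refine Set.mem_iUnion₂.mpr ⟨_, ⟨n, Or.inr hn, rfl⟩, ?_⟩
          intro x
          simpa using hε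
        · have hmem : Φ n ∈ Φ '' {n | N ≤ n} := ⟨n, hn, rfl⟩
          obtain ⟨y, hy, hny⟩ := Set.mem_iUnion₂.mp (hccov hmem)
          set m := pick y with hm
          have hmN : N ≤ m := hpick1 y hy
          have hΦm : Φ m = y := hpick2 y hy
          refine Set.mem_iUnion₂.mpr ⟨_, ⟨m, Or.inl ⟨y, hy, rfl⟩, rfl⟩, ?_⟩
          intro x
          -- pick a net point t close to x
          have hx : (x : X) ∈ ⋃ t ∈ T, Metric.ball t η := hTcov (Set.mem_univ x)
          obtain ⟨t, htT, hxt⟩ := Set.mem_iUnion₂.mp hx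
          have hxt' : dist x t < η := by simpa [Metric.mem_ball] using hxt
          -- middle term
          have hmid : dist (v n t) (v m t) < ε' := by
            have : dist (Φ n) y < ε' := hny
            rw [← hΦm] at this
            have := (dist_pi_lt_iff hε').mp this ⟨t, htT⟩
            simpa [Φ] using this
          -- first term
          have h1 : dist (v n x) (v n t) < 2 * ε' :=
            stmt6_aux (hbound n x t) (hηω x t hxt') (hδsmall n hn) (hδ0 n) hε'
          -- third term
          have h3 : dist (v m t) (v m x) < 2 * ε' := by
            have := stmt6_aux (hbound m t x) (hηω t x (by rwa [dist_comm])) 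
              (hδsmall m hmN) (hδ0 m) hε'
            exact this
          have htri := dist_triangle4 (v n x) (v n t) (v m t) (v m x)
          have : dist (v n x) (v m x) < ε := by
            have : dist (v n x) (v m x) < 5 * ε' := by linarith
            rw [hε'def] at this; linarith
          exact this
    have hcl : IsClosed (closure (Set.range fun n =>
        (UniformFun.ofFun (v n) : UniformFun X Y))) := isClosed_closure
    exact TotallyBounded.isCompact_of_isClosed htb.closure hcl
  · -- Continuity of subsequential uniform limits.
    intro g φ hφ hconv
    rw [Metric.tendstoUniformly_iff] at hconv
    have : UniformContinuous g := by
      rw [Metric.uniformContinuous_iff]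
      intro ε hε
      have hε4 : 0 < ε / 4 := by positivity
      obtain ⟨η, hη, hηω⟩ := hω (ENNReal.ofReal (ε / 4)) (by simpa using hε4)
      -- eventually: uniform closeness and small δ
      have h1 : ∀ᶠ k in atTop, ∀ x, dist (g x) (v (φ k) x) < ε / 4 := hconv _ hε4
      have h2 : ∀ᶠ k in atTop, δ (φ k) < ε / 4 :=
        (hφ.tendsto_atTop.eventually (hδ.eventually (gt_mem_nhds hε4)))
      obtain ⟨k, hk1, hk2⟩ := (h1.and h2).exists
      refine ⟨η, hη, fun {a b} hab => ?_⟩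
      have hmid : dist (v (φ k) a) (v (φ k) b) < 2 * (ε / 4) :=
        stmt6_aux (hbound (φ k) a b) (hηω a b hab) hk2 (hδ0 _) hε4
      have ha := hk1 a
      have hb := hk1 b
      have htri := dist_triangle4 (g a) (v (φ k) a) (v (φ k) b) (g b)
      rw [dist_comm (v (φ k) b) (g b)] at htri
      linarith
    exact this.continuous
end

section
/- Let S be a finite set with |S| = n, let c ∈ (0,1], and let m be a positive integer with m ≤ n/2. Let φ be a function assigning to every m-element subset Z ⊆ S a subset φ(Z) ⊆ Z with |φ(Z)| ≥ c·m. Then the number of distinct values taken by φ on m-element subsets of S is at least C(n,m) / C(n, ⌊(1−c)m⌋), where C(·,·) denotes the binomial coefficient. -/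
open Finset

theorem Nat.choose_le_choose_of_le_of_le_half {n j k : ℕ} (hjk : j ≤ k) (hk : k ≤ n / 2) :
    n.choose j ≤ n.choose k := by
  induction k, hjk using Nat.le_induction with
  | base => exact le_rfl
  | succ k _ ih => exact (ih (by omega)).trans (Nat.choose_le_succ_of_lt_half_left hk)

/-- Each value `W` of `φ` has at most `C(#S - #W, m - #W) ≤ C(#S, m - k)` preimages, namely
the `m`-subsets of `S` containing `W`. -/
theorem Finset.choose_card_le_mul_card_image_powersetCard {α : Type*} [DecidableEq α]
    {S : Finset α} {m k : ℕ} (φ : Finset α → Finset α) (hm : m ≤ #S / 2)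
    (hsub : ∀ Z ∈ S.powersetCard m, φ Z ⊆ Z) (hcard : ∀ Z ∈ S.powersetCard m, k ≤ #(φ Z)) :
    (#S).choose m ≤ (#S).choose (m - k) * #((S.powersetCard m).image φ) := by
  rw [← card_powersetCard]
  refine card_le_mul_card_image _ _ fun W hW ↦ ?_
  obtain ⟨Z₀, hZ₀, rfl⟩ := mem_image.1 hW
  obtain ⟨hZ₀S, hZ₀m⟩ := mem_powersetCard.1 hZ₀
  have hWm : #(φ Z₀) ≤ m := hZ₀m ▸ card_le_card (hsub Z₀ hZ₀)
  have hkW := hcard Z₀ hZ₀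
  have hfiber : {Z ∈ S.powersetCard m | φ Z = φ Z₀} ⊆ {Z ∈ S.powersetCard m | φ Z₀ ⊆ Z} :=
    monotone_filter_right _ fun Z hZ hφZ ↦ hφZ ▸ hsub Z hZ
  calc #{Z ∈ S.powersetCard m | φ Z = φ Z₀}
      ≤ #{Z ∈ S.powersetCard m | φ Z₀ ⊆ Z} := card_le_card hfiber
    _ = (#S - #(φ Z₀)).choose (m - #(φ Z₀)) :=
        card_filter_powersetCard_subset _ _ _ ((hsub Z₀ hZ₀).trans hZ₀S) hWm
    _ ≤ (#S).choose (m - #(φ Z₀)) := Nat.choose_le_choose _ (Nat.sub_le _ _)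
    _ ≤ (#S).choose (m - k) := Nat.choose_le_choose_of_le_of_le_half (by omega) (by omega)

theorem stmt7_general {α : Type*} [DecidableEq α] (S : Finset α) (n : ℕ) (hn : S.card = n)
    (c : ℝ) (hc : c ∈ Set.Ioc (0:ℝ) 1) (m : ℕ) (hmn : 2 * m ≤ n)
    (φ : Finset α → Finset α)
    (hsub : ∀ Z ∈ S.powersetCard m, φ Z ⊆ Z)
    (hcard : ∀ Z ∈ S.powersetCard m, (c * m : ℝ) ≤ ((φ Z).card : ℝ)) :
    (n.choose m : ℝ) / (n.choose ⌊(1 - c) * (m : ℝ)⌋₊ : ℝ)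
      ≤ (((S.powersetCard m).image φ).card : ℝ) := by
  subst hn
  obtain ⟨hc₀, hc₁⟩ := hc
  set t := ⌊(1 - c) * (m : ℝ)⌋₊
  have htm : t ≤ m := Nat.floor_le_of_le (by nlinarith [(Nat.cast_nonneg m : (0 : ℝ) ≤ m)])
  have hceil : ⌈c * m⌉₊ ≤ m := Nat.ceil_le.2 (by nlinarith [(Nat.cast_nonneg m : (0 : ℝ) ≤ m)])
  have hmt : m - ⌈c * m⌉₊ ≤ t := Nat.le_floor (by
    rw [Nat.cast_sub hceil]
    linarith [Nat.le_ceil (c * m)])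
  have key : (#S).choose m ≤ #((S.powersetCard m).image φ) * (#S).choose t := by
    rw [mul_comm]
    refine (choose_card_le_mul_card_image_powersetCard φ (by omega) hsub
      fun Z hZ ↦ Nat.ceil_le.2 (hcard Z hZ)).trans (Nat.mul_le_mul_right _ ?_)
    exact Nat.choose_le_choose_of_le_of_le_half hmt (by omega)
  exact div_le_of_le_mul₀ (by positivity) (by positivity) (by exact_mod_cast key)

/-- Counting lemma: if `φ` assigns to each `m`-subset `Z` of an `n`-set a subset
`φ(Z) ⊆ Z` of size at least `c·m` (with `m ≤ n/2`), then `φ` takes at least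
`C(n,m)/C(n,⌊(1-c)m⌋)` distinct values. -/
theorem stmt7 {α : Type*} [DecidableEq α] (S : Finset α) (n : ℕ) (hn : S.card = n)
    (c : ℝ) (hc : c ∈ Set.Ioc (0:ℝ) 1) (m : ℕ) (hm : 0 < m) (hmn : 2 * m ≤ n)
    (φ : Finset α → Finset α)
    (hsub : ∀ Z ∈ S.powersetCard m, φ Z ⊆ Z)
    (hcard : ∀ Z ∈ S.powersetCard m, (c * m : ℝ) ≤ ((φ Z).card : ℝ)) :
    (n.choose m : ℝ) / (n.choose ⌊(1 - c) * (m : ℝ)⌋₊ : ℝ)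
      ≤ (((S.powersetCard m).image φ).card : ℝ) :=
  stmt7_general S n hn c hc m hmn φ hsub hcard
end

section
/- Let (x₁, …, x_N) be a finite sequence in a set V. Define indices recursively by s₁ = max{ j ≤ N : x_j = x₁ }, and, given s_i < N, s_{i+1} = max{ j ≤ N : x_j = x_{s_i + 1} }; stop when s_i = N, say after n steps. Then the resulting sequence (x_{s₁}, x_{s₂}, …, x_{s_n}) (i) has pairwise distinct entries, (ii) satisfies x_{s₁} = x₁ and x_{s_n} = x_N, and (iii) for each i < n the pair (x_{s_i}, x_{s_{i+1}}) equals the pair of consecutive entries (x_{s_i}, x_{s_i + 1}) of the original sequence. -/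
/-- Loop erasure: if `s 0, …, s (n-1)` are the indices (in `{0, …, N-1}`) produced by
the loop-erasing recursion applied to the sequence `x 0, …, x (N-1)` — i.e. `s 0` is
the largest index with the same value as `x 0`, each `s (i+1)` is the largest index
with the same value as `x (s i + 1)`, and the procedure stops exactly when it reaches
the last index — then the subsequence `x (s 0), …, x (s (n-1))` has pairwise distinct
entries, starts at `x 0`, ends at `x (N-1)`, and each consecutive pair
`(x (s i), x (s (i+1)))` equals the consecutive pair `(x (s i), x (s i + 1))` of the
original sequence. -/
theorem stmt14 {V : Type*} (N : ℕ) (hN : 0 < N) (x : ℕ → V)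
    (n : ℕ) (hn : 0 < n) (s : ℕ → ℕ)
    (hs0 : s 0 < N ∧ x (s 0) = x 0 ∧ ∀ j < N, x j = x 0 → j ≤ s 0)
    (hlast : s (n - 1) = N - 1)
    (hmid : ∀ i, i < n - 1 → s i < N - 1)
    (hrec : ∀ i, i + 1 < n →
      s (i + 1) < N ∧ x (s (i + 1)) = x (s i + 1) ∧
      ∀ j < N, x j = x (s i + 1) → j ≤ s (i + 1)) :
    (∀ i j, i < n → j < n → x (s i) = x (s j) → i = j) ∧
    (x (s 0) = x 0 ∧ x (s (n - 1)) = x (N - 1)) ∧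
    (∀ i, i + 1 < n → x (s (i + 1)) = x (s i + 1)) := by
  have hsN : ∀ i, i < n → s i < N := by
    intro i hi
    match i with
    | 0 => exact hs0.1
    | k + 1 => exact (hrec k hi).1
  have step : ∀ i, i + 1 < n → s i < s (i + 1) := by
    intro i hi
    have h1 : s i < N - 1 := hmid i (by omega)
    have h2 : s i + 1 ≤ s (i + 1) :=
      (hrec i hi).2.2 (s i + 1) (by omega) rfl
    omega
  have mono : ∀ i j, i < j → j < n → s i < s j := by
    intro i j hij hj
    induction j with
    | zero => omega
    | succ j ih =>
      have hstep : s j < s (j + 1) := step j hj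
      rcases Nat.lt_or_ge i j with h | h
      · exact (ih h (by omega)).trans hstep
      · have : i = j := by omega
        subst this; exact hstep
  have key : ∀ i j, i < j → j < n → x (s i) = x (s j) → False := by
    intro i j hij hj heq
    have hjN := hsN j hj
    match i with
    | 0 =>
      have : s j ≤ s 0 := hs0.2.2 (s j) hjN (by rw [← heq, hs0.2.1])
      have := mono 0 j hij hj
      omega
    | k + 1 =>
      have hk : k + 1 < n := lt_trans hij hj
      have : s j ≤ s (k + 1) := (hrec k hk).2.2 (s j) hjN
        (by rw [← heq, (hrec k hk).2.1])
      have := mono (k + 1) j hij hj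
      omega
  refine ⟨?_, ⟨hs0.2.1, by rw [hlast]⟩, fun i hi => (hrec i hi).2.1⟩
  intro i j hi hj heq
  rcases lt_trichotomy i j with h | h | h
  · exact absurd heq (fun h' => key i j h hj h')
  · exact h
  · exact absurd heq.symm (fun h' => key j i h hi h')
end

section
/- Let (Ω₁, d₁) and (Ω₂, d₂) be complete separable metric spaces. Let X be a random variable with values in Ω₁ and let Y_n, Y be random variables with values in Ω₂, all defined on the same probability space, such that the pairs (X, Y_n) converge in distribution to (X, Y). If Y is almost surely equal to f(X) for some measurable function f : Ω₁ → Ω₂, then Y_n converges to Y in probability. -/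
open MeasureTheory Filter

open scoped BoundedContinuousFunction Topology

/-!
For bounded continuous `h` on `Ω₂`, approximate `h ∘ f` in `L¹` of the law of `X` by a bounded
continuous `k`. Testing the convergence against `(x, y) ↦ ‖h y - k x‖`, whose limit
`E ‖h (f X) - k X‖` is small, shows `h (Y n) → h Ylim` in `L¹`, hence in probability.
This gives `Y n → Ylim` in probability through the test functions `min (dist · z) ε`, `z` running
over a dense sequence: off a set of small measure `Ylim` is `ε/4`-close to one of finitely many
`z j`, and then `ε ≤ dist (Y n) Ylim` forces the `j`-th test function to move by `ε/2`.
-/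

section TruncatedDist

variable {E : Type*} [PseudoMetricSpace E]

def truncatedDist (z : E) {r : ℝ} (hr : 0 ≤ r) : E →ᵇ ℝ :=
  BoundedContinuousFunction.mkOfBound ⟨fun y => min (dist y z) r, by fun_prop⟩ r fun y y' => by
    rw [Real.dist_eq]
    exact abs_sub_le_of_nonneg_of_le (le_min dist_nonneg hr) (min_le_right _ _)
      (le_min dist_nonneg hr) (min_le_right _ _)

theorem half_le_dist_truncatedDist {y y' z : E} {ε : ℝ} (hε : 0 < ε) (hyy' : ε ≤ dist y y')
    (hy'z : dist y' z < ε / 4) :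
    ε / 2 ≤ dist (truncatedDist z hε.le y) (truncatedDist z hε.le y') := by
  have hy' : truncatedDist z hε.le y' = dist y' z :=
    min_eq_left (by linarith)
  have hy : 3 * ε / 4 ≤ truncatedDist z hε.le y :=
    le_min (by linarith [dist_triangle_right y y' z]) (by linarith)
  rw [Real.dist_eq, hy']
  exact le_trans (by linarith) (le_abs_self _)

end TruncatedDist

section ConvergenceInMeasure

variable {Ω : Type*} [MeasurableSpace Ω] {P : Measure Ω} {ι : Type*} {l : Filter ι}

theorem tendstoInMeasure_of_tendsto_integral_norm_sub {F : Type*} [NormedAddCommGroup F]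
    {f : ι → Ω → F} {g : Ω → F} (hf : ∀ i, Integrable (f i) P) (hg : Integrable g P)
    (hfg : Tendsto (fun i => ∫ ω, ‖f i ω - g ω‖ ∂P) l (𝓝 0)) : TendstoInMeasure P f l g := by
  refine tendstoInMeasure_of_tendsto_eLpNorm one_ne_zero (fun i => (hf i).aestronglyMeasurable)
    hg.aestronglyMeasurable ?_
  have h := ENNReal.tendsto_ofReal hfg
  rw [ENNReal.ofReal_zero] at h
  exact h.congr fun i => (ofReal_integral_norm_eq_lintegral_enorm ((hf i).sub hg)).trans
    eLpNorm_one_eq_lintegral_enorm.symm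

variable [IsFiniteMeasure P] {E : Type*} [PseudoMetricSpace E] [MeasurableSpace E]
  [OpensMeasurableSpace E]

theorem tendsto_measure_forall_le_dist_of_denseRange {z : ℕ → E} (hz : DenseRange z)
    {Y : Ω → E} (hY : Measurable Y) {r : ℝ} (hr : 0 < r) :
    Tendsto (fun N => P {ω | ∀ j ≤ N, r ≤ dist (Y ω) (z j)}) atTop (𝓝 0) := by
  have hmeas : ∀ N, MeasurableSet {ω | ∀ j ≤ N, r ≤ dist (Y ω) (z j)} := fun N => by
    simp only [Set.ofPred_forall]
    exact .iInter fun j => .iInter fun _ =>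
      measurableSet_le measurable_const ((continuous_id.dist continuous_const).measurable.comp hY)
  have hanti : Antitone fun N => {ω | ∀ j ≤ N, r ≤ dist (Y ω) (z j)} :=
    fun M N hMN ω hω j hj => hω j (hj.trans hMN)
  have hempty : ⋂ N, {ω | ∀ j ≤ N, r ≤ dist (Y ω) (z j)} = ∅ := by
    refine Set.eq_empty_of_forall_notMem fun ω hω => ?_
    obtain ⟨j, hj⟩ := hz.exists_dist_lt (Y ω) hr
    exact (Set.mem_iInter.1 hω j j le_rfl).not_gt hj
  simpa [hempty, Function.comp_def] using
    tendsto_measure_iInter_atTop (fun N => (hmeas N).nullMeasurableSet) hanti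
      ⟨0, measure_ne_top _ _⟩

theorem tendstoInMeasure_of_forall_boundedContinuous_comp [TopologicalSpace.SeparableSpace E]
    {Y : ι → Ω → E} {Ylim : Ω → E} (hYlim : Measurable Ylim)
    (h : ∀ g : E →ᵇ ℝ, TendstoInMeasure P (fun i ω => g (Y i ω)) l (fun ω => g (Ylim ω))) :
    TendstoInMeasure P Y l Ylim := by
  rcases isEmpty_or_nonempty E with hE | hE
  · have : IsEmpty Ω := ⟨fun ω => hE.false (Ylim ω)⟩
    intro ε hε
    simpa [Set.eq_empty_of_isEmpty] using tendsto_const_nhds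
  set z := TopologicalSpace.denseSeq E
  rw [tendstoInMeasure_iff_dist]
  intro ε hε
  set g : ℕ → E →ᵇ ℝ := fun j => truncatedDist (z j) hε.le
  rw [ENNReal.tendsto_nhds_zero]
  intro δ hδ
  have hδ2 : 0 < δ / 2 := ENNReal.half_pos hδ.ne'
  obtain ⟨N, hN⟩ := (ENNReal.tendsto_nhds_zero.1 (tendsto_measure_forall_le_dist_of_denseRange
    (P := P) (TopologicalSpace.denseRange_denseSeq E) hYlim (by positivity : 0 < ε / 4))
    (δ / 2) hδ2).exists
  have hsum : Tendsto (fun i => ∑ j ∈ Finset.range (N + 1),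
      P {ω | ε / 2 ≤ dist (g j (Y i ω)) (g j (Ylim ω))}) l (𝓝 0) := by
    simpa using tendsto_finsetSum _ fun j _ =>
      tendstoInMeasure_iff_dist.1 (h (g j)) (ε / 2) (by positivity)
  filter_upwards [ENNReal.tendsto_nhds_zero.1 hsum (δ / 2) hδ2] with i hi
  have hcover : {ω | ε ≤ dist (Y i ω) (Ylim ω)} ⊆ {ω | ∀ j ≤ N, ε / 4 ≤ dist (Ylim ω) (z j)} ∪
      ⋃ j ∈ Finset.range (N + 1), {ω | ε / 2 ≤ dist (g j (Y i ω)) (g j (Ylim ω))} := by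
    intro ω hω
    rw [Set.mem_union, or_iff_not_imp_left]
    intro hfar
    simp only [Set.mem_ofPred_eq, not_forall, not_le] at hfar
    obtain ⟨j, hjN, hj⟩ := hfar
    exact Set.mem_biUnion (Finset.mem_range.2 (Nat.lt_succ_of_le hjN))
      (half_le_dist_truncatedDist hε hω hj)
  calc P {ω | ε ≤ dist (Y i ω) (Ylim ω)}
      ≤ P {ω | ∀ j ≤ N, ε / 4 ≤ dist (Ylim ω) (z j)} + ∑ j ∈ Finset.range (N + 1),
          P {ω | ε / 2 ≤ dist (g j (Y i ω)) (g j (Ylim ω))} :=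
        (measure_mono hcover).trans
          ((measure_union_le _ _).trans (add_le_add_right (measure_biUnion_finset_le _ _) _))
    _ ≤ δ / 2 + δ / 2 := add_le_add hN hi
    _ = δ := ENNReal.add_halves δ

end ConvergenceInMeasure

theorem BoundedContinuousFunction.integrable_comp {Ω T : Type*} [MeasurableSpace Ω]
    {P : Measure Ω} [IsFiniteMeasure P] [TopologicalSpace T] [MeasurableSpace T]
    [OpensMeasurableSpace T] (G : T →ᵇ ℝ) {φ : Ω → T} (hφ : Measurable φ) :
    Integrable (fun ω => G (φ ω)) P :=
  (G.integrable (P.map φ)).comp_measurable hφ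

theorem tendsto_integral_norm_comp_sub_of_tendsto_integral_prod {Ω : Type*} [MeasurableSpace Ω]
    {P : Measure Ω} [IsFiniteMeasure P] {Ω₁ Ω₂ : Type*} [PseudoMetricSpace Ω₁]
    [MeasurableSpace Ω₁] [BorelSpace Ω₁] [TopologicalSpace Ω₂]
    [SecondCountableTopology Ω₂] [MeasurableSpace Ω₂] [OpensMeasurableSpace Ω₂]
    {X : Ω → Ω₁} {Y : ℕ → Ω → Ω₂} {Ylim : Ω → Ω₂} (hX : Measurable X) (hY : ∀ n, Measurable (Y n))
    (hYlim : Measurable Ylim) {f : Ω₁ → Ω₂} (hf : Measurable f) (hdet : ∀ᵐ ω ∂P, Ylim ω = f (X ω))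
    (hconv : ∀ G : Ω₁ × Ω₂ →ᵇ ℝ,
      Tendsto (fun n => ∫ ω, G (X ω, Y n ω) ∂P) atTop (𝓝 (∫ ω, G (X ω, Ylim ω) ∂P)))
    (h : Ω₂ →ᵇ ℝ) :
    Tendsto (fun n => ∫ ω, ‖h (Y n ω) - h (Ylim ω)‖ ∂P) atTop (𝓝 0) := by
  refine tendsto_order.2 ⟨fun a ha => .of_forall fun n =>
    ha.trans_le (integral_nonneg fun _ => norm_nonneg _), fun a ha => ?_⟩
  have hhf : Integrable (fun x => h (f x)) (P.map X) := h.integrable_comp hf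
  obtain ⟨k, hk, -⟩ := hhf.exists_boundedContinuous_integral_sub_le (by positivity : 0 < a / 3)
  let G : Ω₁ × Ω₂ →ᵇ ℝ := (h.compContinuous ⟨Prod.snd, continuous_snd⟩ -
    k.compContinuous ⟨Prod.fst, continuous_fst⟩).normComp
  have hG : ∀ p, G p = ‖h p.2 - k p.1‖ := fun p => rfl
  have hGlim_le : ∫ ω, G (X ω, Ylim ω) ∂P ≤ a / 3 := by
    calc ∫ ω, G (X ω, Ylim ω) ∂P = ∫ ω, ‖h (f (X ω)) - k (X ω)‖ ∂P :=
          integral_congr_ae (hdet.mono fun ω hω => by simp only [hG, hω])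
      _ = ∫ x, ‖h (f x) - k x‖ ∂(P.map X) :=
          (integral_map hX.aemeasurable (hhf.sub (k.integrable _)).norm.1).symm
      _ ≤ a / 3 := hk
  have hGlim_lt : ∫ ω, G (X ω, Ylim ω) ∂P < 2 * a / 3 := by linarith
  filter_upwards [(hconv G).eventually (gt_mem_nhds hGlim_lt)] with n hn
  have hGn := G.integrable_comp (hX.prodMk (hY n)) (P := P)
  have hGlim := G.integrable_comp (hX.prodMk hYlim) (P := P)
  calc ∫ ω, ‖h (Y n ω) - h (Ylim ω)‖ ∂P
      ≤ ∫ ω, G (X ω, Y n ω) + G (X ω, Ylim ω) ∂P := by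
        refine integral_mono ((h.integrable_comp (hY n)).sub (h.integrable_comp hYlim)).norm
          (hGn.add hGlim) fun ω => ?_
        simpa only [hG, norm_sub_rev (h (Ylim ω))] using
          norm_sub_le_norm_sub_add_norm_sub (h (Y n ω)) (k (X ω)) (h (Ylim ω))
    _ = ∫ ω, G (X ω, Y n ω) ∂P + ∫ ω, G (X ω, Ylim ω) ∂P := integral_add hGn hGlim
    _ < a := by linarith

theorem stmt16_general {Ω : Type*} [MeasurableSpace Ω] (P : Measure Ω) [IsProbabilityMeasure P]
    {Ω₁ Ω₂ : Type*}
    [MetricSpace Ω₁]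
    [MeasurableSpace Ω₁] [BorelSpace Ω₁]
    [MetricSpace Ω₂] [TopologicalSpace.SeparableSpace Ω₂]
    [MeasurableSpace Ω₂] [BorelSpace Ω₂]
    (X : Ω → Ω₁) (Y : ℕ → Ω → Ω₂) (Ylim : Ω → Ω₂)
    (hX : Measurable X) (hY : ∀ n, Measurable (Y n)) (hYlim : Measurable Ylim)
    (f : Ω₁ → Ω₂) (hf : Measurable f) (hdet : ∀ᵐ ω ∂P, Ylim ω = f (X ω))
    (hconv : ∀ g : BoundedContinuousFunction (Ω₁ × Ω₂) ℝ,
      Tendsto (fun n => ∫ ω, g (X ω, Y n ω) ∂P) atTop (nhds (∫ ω, g (X ω, Ylim ω) ∂P))) :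
    TendstoInMeasure P Y atTop Ylim :=
  tendstoInMeasure_of_forall_boundedContinuous_comp hYlim fun h =>
    tendstoInMeasure_of_tendsto_integral_norm_sub (fun n => h.integrable_comp (hY n))
      (h.integrable_comp hYlim)
      (tendsto_integral_norm_comp_sub_of_tendsto_integral_prod hX hY hYlim hf hdet hconv h)

/-- If `(X, Y_n) → (X, Y)` in distribution (tested against bounded continuous functions)
on a product of complete separable metric spaces, and `Y` is a.s. a measurable function
of `X`, then `Y_n → Y` in probability. -/
theorem stmt16 {Ω : Type*} [MeasurableSpace Ω] (P : Measure Ω) [IsProbabilityMeasure P]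
    {Ω₁ Ω₂ : Type*}
    [MetricSpace Ω₁] [CompleteSpace Ω₁] [TopologicalSpace.SeparableSpace Ω₁]
    [MeasurableSpace Ω₁] [BorelSpace Ω₁]
    [MetricSpace Ω₂] [CompleteSpace Ω₂] [TopologicalSpace.SeparableSpace Ω₂]
    [MeasurableSpace Ω₂] [BorelSpace Ω₂]
    (X : Ω → Ω₁) (Y : ℕ → Ω → Ω₂) (Ylim : Ω → Ω₂)
    (hX : Measurable X) (hY : ∀ n, Measurable (Y n)) (hYlim : Measurable Ylim)
    (f : Ω₁ → Ω₂) (hf : Measurable f) (hdet : ∀ᵐ ω ∂P, Ylim ω = f (X ω))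
    (hconv : ∀ g : BoundedContinuousFunction (Ω₁ × Ω₂) ℝ,
      Tendsto (fun n => ∫ ω, g (X ω, Y n ω) ∂P) atTop (nhds (∫ ω, g (X ω, Ylim ω) ∂P))) :
    TendstoInMeasure P Y atTop Ylim :=
  stmt16_general P X Y Ylim hX hY hYlim f hf hdet hconv
end

section
/- (Efron–Stein inequality) Let X₁, …, X_n be independent random variables and let F = F(X₁, …, X_n) be a square-integrable measurable function of them. Then Var[F] ≤ Σ_{i=1}^n E[ Var[F | (X_j)_{j ≠ i}] ]. -/
/-!
Reveal the coordinates one at a time, in some order `i₁, …, iₙ`, and let `Fₖ` be the conditional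
expectation of `F` given the first `k` of them. By the law of total variance,
`Var F = ∑ₖ E[(Fₖ₊₁ - Fₖ)²]`. Under a product measure, conditional expectations onto coordinate
σ-algebras are partial integrals, so they commute; hence for `i = iₖ₊₁` the increment
`Fₖ₊₁ - Fₖ` is the conditional expectation of `F - E[F | (X_j)_{j ≠ i}]` given the first `k + 1`
coordinates, and the `L²`-contractivity of conditional expectation bounds
`E[(Fₖ₊₁ - Fₖ)²]` by `E[(F - E[F | (X_j)_{j ≠ i}])²]`.
-/

open MeasureTheory ProbabilityTheory

section ConditionalExpectation

variable {Ω : Type*} {m m' m₀ : MeasurableSpace Ω} {μ : Measure[m₀] Ω} {X Y : Ω → ℝ}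

lemma integral_condExp_sq_le (hX : MemLp X 2 μ) :
    ∫ ω, (μ[X | m] ω) ^ 2 ∂μ ≤ ∫ ω, X ω ^ 2 ∂μ := by
  have hX2 : Integrable (fun ω => ‖X ω‖ ^ (2 : ℝ)) μ := by
    simpa [Real.rpow_two] using hX.integrable_sq
  simpa [Real.rpow_two] using integral_norm_condExp_rpow_le (m := m) one_le_two hX2

lemma integral_sq_condExp_sub_le [IsFiniteMeasure μ] (hX : MemLp X 2 μ)
    (hY : μ[μ[X | m'] | m] =ᵐ[μ] Y) :
    ∫ ω, (μ[X | m] ω - Y ω) ^ 2 ∂μ ≤ ∫ ω, (X ω - μ[X | m'] ω) ^ 2 ∂μ := by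
  have hsub := condExp_sub (m := m) (hX.integrable one_le_two)
    (integrable_condExp (m := m') (f := X))
  have hdiff : μ[X - μ[X | m'] | m] =ᵐ[μ] μ[X | m] - Y := by
    filter_upwards [hsub, hY] with ω hsubω hω
    simp [hsubω, hω]
  calc ∫ ω, (μ[X | m] ω - Y ω) ^ 2 ∂μ = ∫ ω, (μ[X - μ[X | m'] | m] ω) ^ 2 ∂μ := by
        refine integral_congr_ae ?_
        filter_upwards [hdiff] with ω hω
        simp [hω]
    _ ≤ ∫ ω, (X ω - μ[X | m'] ω) ^ 2 ∂μ :=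
        integral_condExp_sq_le (hX.sub (hX.condExp one_le_two))

lemma variance_condExp_eq_add_sum [IsProbabilityMeasure μ] (ℱ : Filtration ℕ m₀)
    (hX : MemLp X 2 μ) (n : ℕ) :
    Var[μ[X | ℱ n]; μ] = Var[μ[X | ℱ 0]; μ] +
      ∑ k ∈ Finset.range n, ∫ ω, (μ[X | ℱ (k + 1)] ω - μ[X | ℱ k] ω) ^ 2 ∂μ := by
  induction n with
  | zero => simp
  | succ n ih =>
    have htower : μ[μ[X | ℱ (n + 1)] | ℱ n] =ᵐ[μ] μ[X | ℱ n] :=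
      condExp_condExp_of_le (ℱ.mono n.le_succ) (ℱ.le _)
    have htotal :=
      integral_condVar_add_variance_condExp (ℱ.le n) (hX.condExp one_le_two (m := ℱ (n + 1)))
    have hcondVar : μ[Var[μ[X | ℱ (n + 1)]; μ | ℱ n]] =
        ∫ ω, (μ[X | ℱ (n + 1)] ω - μ[X | ℱ n] ω) ^ 2 ∂μ := by
      rw [condVar, integral_condExp (ℱ.le n)]
      refine integral_congr_ae ?_
      filter_upwards [htower] with ω hω
      simp [hω]
    rw [variance_congr htower, hcondVar] at htotal
    rw [Finset.sum_range_succ, ← htotal, ih]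
    ring

end ConditionalExpectation

lemma piecewise_piecewise_eq_piecewise_inter {ι : Type*} {α : ι → Type*} (S T : Set ι)
    [DecidablePred (· ∈ S)] [DecidablePred (· ∈ T)] (ω y z : ∀ i, α i) :
    T.piecewise (S.piecewise ω y) z = (S ∩ T).piecewise ω (T.piecewise y z) := by
  ext j
  by_cases hT : j ∈ T <;> by_cases hS : j ∈ S <;> simp [Set.piecewise, hT, hS]

section CylinderEvents

variable {ι : Type*} {α : ι → Type*} [∀ i, MeasurableSpace (α i)]

lemma comap_restrict_eq_cylinderEvents (p : ι → Prop) :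
    MeasurableSpace.pi.comap (fun (ω : ∀ i, α i) (j : Subtype p) => ω j) =
      cylinderEvents {j | p j} := by
  let r := fun (ω : ∀ i, α i) (j : Subtype p) => ω j
  refine le_antisymm (measurable_restrict_cylinderEvents {j | p j}).comap_le ?_
  have hr : Measurable[MeasurableSpace.pi.comap r] r := Measurable.of_comap_le le_rfl
  have hid : @Measurable _ _ (MeasurableSpace.pi.comap r) (cylinderEvents {j | p j})
      (id : (∀ i, α i) → ∀ i, α i) :=
    measurable_cylinderEvents_iff.2 fun j hj =>
      (measurable_pi_apply (⟨j, hj⟩ : Subtype p)).comp hr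
  exact fun s hs => hid hs

lemma piecewise_mem_iff {S : Set ι} [DecidablePred (· ∈ S)] {s : Set (∀ i, α i)}
    (hs : MeasurableSet[cylinderEvents S] s) (ω y : ∀ i, α i) :
    S.piecewise ω y ∈ s ↔ ω ∈ s := by
  obtain ⟨t, -, rfl⟩ : MeasurableSet[MeasurableSpace.pi.comap fun ω (j : S) => ω j] s := by
    rwa [comap_restrict_eq_cylinderEvents]
  have : (fun j : S => S.piecewise ω y j) = fun j : S => ω j :=
    funext fun j => S.piecewise_eq_of_mem _ _ j.2
  simp only [Set.mem_preimage, this]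

lemma measurable_piecewise_cylinderEvents (S : Set ι) [DecidablePred (· ∈ S)] :
    Measurable[(cylinderEvents S).prod MeasurableSpace.pi]
      fun p : (∀ i, α i) × (∀ i, α i) => S.piecewise p.1 p.2 := by
  refine @measurable_pi_lambda _ _ _ ((cylinderEvents S).prod MeasurableSpace.pi) _ _
    fun j => ?_
  by_cases hj : j ∈ S
  · simp only [Set.piecewise, hj, if_true]
    exact (measurable_cylinderEvent_apply hj).comp (@measurable_fst _ _ (cylinderEvents S) _)
  · simp only [Set.piecewise, hj, if_false]
    exact (measurable_pi_apply j).comp (@measurable_snd _ _ (cylinderEvents S) _)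

lemma measurable_piecewise (S : Set ι) [DecidablePred (· ∈ S)] :
    Measurable fun p : (∀ i, α i) × (∀ i, α i) => S.piecewise p.1 p.2 :=
  (measurable_piecewise_cylinderEvents S).mono
    (sup_le_sup_right (MeasurableSpace.comap_mono cylinderEvents_le_pi) _) le_rfl

def piRankLT (r : ι → ℕ) : Filtration ℕ (MeasurableSpace.pi : MeasurableSpace (∀ i, α i)) where
  seq k := cylinderEvents {j | r j < k}
  mono' _ _ hkl := cylinderEvents_mono fun _ hj => lt_of_lt_of_le hj hkl
  le' _ := cylinderEvents_le_pi

lemma piRankLT_zero (r : ι → ℕ) : piRankLT (α := α) r 0 = ⊥ := by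
  simp [piRankLT, cylinderEvents]

lemma piRankLT_of_forall_lt {r : ι → ℕ} {n : ℕ} (hr : ∀ j, r j < n) :
    piRankLT (α := α) r n = MeasurableSpace.pi := by
  simp [piRankLT, hr]

end CylinderEvents

section ProductMeasure

variable {ι : Type*} [Fintype ι] {α : ι → Type*} [∀ i, MeasurableSpace (α i)]
  (ν : ∀ i, Measure (α i))

noncomputable def integralCompl (S : Set ι) [DecidablePred (· ∈ S)] (f : (∀ i, α i) → ℝ)
    (ω : ∀ i, α i) : ℝ :=
  ∫ y, f (S.piecewise ω y) ∂Measure.pi ν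

lemma integralCompl_indicator {S : Set ι} [DecidablePred (· ∈ S)] {s : Set (∀ i, α i)}
    (hs : MeasurableSet[cylinderEvents S] s) (f : (∀ i, α i) → ℝ) :
    integralCompl ν S (s.indicator f) = s.indicator (integralCompl ν S f) := by
  ext ω
  by_cases hω : ω ∈ s
  · simp [integralCompl, Set.indicator_of_mem, hω, piecewise_mem_iff hs]
  · simp [integralCompl, Set.indicator_of_notMem, hω, piecewise_mem_iff hs]

variable [∀ i, IsProbabilityMeasure (ν i)]

lemma measurePreserving_piecewise (S : Set ι) [DecidablePred (· ∈ S)] :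
    MeasurePreserving (fun p : (∀ i, α i) × (∀ i, α i) => S.piecewise p.1 p.2)
      ((Measure.pi ν).prod (Measure.pi ν)) (Measure.pi ν) := by
  let φ := MeasurableEquiv.piEquivPiSubtypeProd α (· ∈ S)
  have hφ : MeasurePreserving φ _ _ := measurePreserving_piEquivPiSubtypeProd ν (· ∈ S)
  have hsplit : (fun p : (∀ i, α i) × (∀ i, α i) => S.piecewise p.1 p.2) =
      φ.symm ∘ Prod.map (Prod.fst ∘ φ) (Prod.snd ∘ φ) := by
    ext p j
    by_cases hj : j ∈ S <;>
      simp [φ, MeasurableEquiv.piEquivPiSubtypeProd, Equiv.piEquivPiSubtypeProd, hj]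
  rw [hsplit]
  exact (hφ.symm _).comp ((measurePreserving_fst.comp hφ).prod (measurePreserving_snd.comp hφ))

lemma integrable_comp_piecewise (S : Set ι) [DecidablePred (· ∈ S)] {f : (∀ i, α i) → ℝ}
    (hf : Integrable f (Measure.pi ν)) :
    Integrable (fun p : (∀ i, α i) × (∀ i, α i) => f (S.piecewise p.1 p.2))
      ((Measure.pi ν).prod (Measure.pi ν)) :=
  ((measurePreserving_piecewise ν S).integrable_comp hf.aestronglyMeasurable).2 hf

lemma integral_integral_piecewise (S : Set ι) [DecidablePred (· ∈ S)] {f : (∀ i, α i) → ℝ}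
    (hf : Integrable f (Measure.pi ν)) :
    ∫ x, ∫ y, f (S.piecewise x y) ∂Measure.pi ν ∂Measure.pi ν = ∫ x, f x ∂Measure.pi ν := by
  have hmp := measurePreserving_piecewise ν S
  rw [← integral_prod _ (integrable_comp_piecewise ν S hf), ← integral_map
    (measurable_piecewise S).aemeasurable (by rw [hmp.map_eq]; exact hf.aestronglyMeasurable),
    hmp.map_eq]

lemma stronglyMeasurable_integralCompl (S : Set ι) [DecidablePred (· ∈ S)]
    {f : (∀ i, α i) → ℝ} (hf : StronglyMeasurable f) :
    StronglyMeasurable[cylinderEvents S] (integralCompl ν S f) :=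
  @StronglyMeasurable.integral_prod_right' _ _ _ (cylinderEvents S) _ _ _ _ _
    (fun p => f (S.piecewise p.1 p.2)) (hf.comp_measurable (measurable_piecewise_cylinderEvents S))

lemma integrable_integralCompl (S : Set ι) [DecidablePred (· ∈ S)] {f : (∀ i, α i) → ℝ}
    (hf : Integrable f (Measure.pi ν)) : Integrable (integralCompl ν S f) (Measure.pi ν) :=
  (integrable_comp_piecewise ν S hf).integral_prod_left

lemma integral_integralCompl (S : Set ι) [DecidablePred (· ∈ S)] {f : (∀ i, α i) → ℝ}
    (hf : Integrable f (Measure.pi ν)) :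
    ∫ ω, integralCompl ν S f ω ∂Measure.pi ν = ∫ ω, f ω ∂Measure.pi ν :=
  integral_integral_piecewise ν S hf

lemma integralCompl_ae_eq_condExp (S : Set ι) [DecidablePred (· ∈ S)] {f : (∀ i, α i) → ℝ}
    (hf : StronglyMeasurable f) (hfi : Integrable f (Measure.pi ν)) :
    integralCompl ν S f =ᵐ[Measure.pi ν] (Measure.pi ν)[f | cylinderEvents S] := by
  refine ae_eq_condExp_of_forall_setIntegral_eq cylinderEvents_le_pi hfi
    (fun s _ _ => (integrable_integralCompl ν S hfi).integrableOn) (fun s hs _ => ?_)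
    (stronglyMeasurable_integralCompl ν S hf).aestronglyMeasurable
  have hs' : MeasurableSet s := cylinderEvents_le_pi _ hs
  rw [← integral_indicator hs', ← integral_indicator hs', ← integralCompl_indicator ν hs,
    integral_integralCompl ν S (hfi.indicator hs')]

lemma integralCompl_integralCompl (S T : Set ι) [DecidablePred (· ∈ S)] [DecidablePred (· ∈ T)]
    {f : (∀ i, α i) → ℝ} (hf : Integrable f (Measure.pi ν)) :
    integralCompl ν S (integralCompl ν T f) =ᵐ[Measure.pi ν] integralCompl ν (S ∩ T) f := by
  filter_upwards [(integrable_comp_piecewise ν (S ∩ T) hf).prod_right_ae] with ω hω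
  simp only [integralCompl, piecewise_piecewise_eq_piecewise_inter]
  exact integral_integral_piecewise ν T hω

lemma condExp_condExp_cylinderEvents (S T : Set ι) {f : (∀ i, α i) → ℝ}
    (hf : Integrable f (Measure.pi ν)) :
    (Measure.pi ν)[(Measure.pi ν)[f | cylinderEvents T] | cylinderEvents S] =ᵐ[Measure.pi ν]
      (Measure.pi ν)[f | cylinderEvents (S ∩ T)] := by
  classical
  set g := hf.aestronglyMeasurable.mk f
  have hg : StronglyMeasurable g := hf.aestronglyMeasurable.stronglyMeasurable_mk
  have hfg : f =ᵐ[Measure.pi ν] g := hf.aestronglyMeasurable.ae_eq_mk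
  have hgi : Integrable g (Measure.pi ν) := hf.congr hfg
  calc (Measure.pi ν)[(Measure.pi ν)[f | cylinderEvents T] | cylinderEvents S]
      =ᵐ[Measure.pi ν] (Measure.pi ν)[integralCompl ν T g | cylinderEvents S] :=
        condExp_congr_ae
          ((condExp_congr_ae hfg).trans (integralCompl_ae_eq_condExp ν T hg hgi).symm)
    _ =ᵐ[Measure.pi ν] integralCompl ν S (integralCompl ν T g) :=
        (integralCompl_ae_eq_condExp ν S
          ((stronglyMeasurable_integralCompl ν T hg).mono cylinderEvents_le_pi)
          (integrable_integralCompl ν T hgi)).symm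
    _ =ᵐ[Measure.pi ν] integralCompl ν (S ∩ T) g := integralCompl_integralCompl ν S T hgi
    _ =ᵐ[Measure.pi ν] (Measure.pi ν)[f | cylinderEvents (S ∩ T)] :=
        (integralCompl_ae_eq_condExp ν (S ∩ T) hg hgi).trans (condExp_congr_ae hfg.symm)

lemma condExp_condExp_piRankLT {r : ι → ℕ} (hr : Function.Injective r) (i : ι)
    {f : (∀ i, α i) → ℝ} (hf : Integrable f (Measure.pi ν)) :
    (Measure.pi ν)[(Measure.pi ν)[f | cylinderEvents {j | j ≠ i}] | piRankLT r (r i + 1)]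
      =ᵐ[Measure.pi ν] (Measure.pi ν)[f | piRankLT r (r i)] := by
  have hinter : {j | r j < r i + 1} ∩ {j | j ≠ i} = {j | r j < r i} := by
    ext j
    simp only [Set.mem_inter_iff, Set.mem_ofPred_eq, Nat.lt_succ_iff_lt_or_eq, hr.eq_iff]
    constructor
    · rintro ⟨hlt | rfl, hne⟩
      exacts [hlt, absurd rfl hne]
    · exact fun hlt => ⟨Or.inl hlt, by rintro rfl; exact lt_irrefl _ hlt⟩
  have := condExp_condExp_cylinderEvents ν {j | r j < r i + 1} {j | j ≠ i} hf
  rwa [hinter] at this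

end ProductMeasure

theorem stmt17_general {ι : Type*} [Fintype ι] {α : ι → Type*} [∀ i, MeasurableSpace (α i)]
    (ν : ∀ i, Measure (α i)) [∀ i, IsProbabilityMeasure (ν i)]
    (F : (∀ i, α i) → ℝ) (hF2 : MemLp F 2 (Measure.pi ν)) :
    variance F (Measure.pi ν) ≤
      ∑ i : ι, ∫ ω,
        (F ω - ((Measure.pi ν)[F |
          MeasurableSpace.comap
            (fun (ω' : ∀ j, α j) (j : {j : ι // j ≠ i}) => ω' j.1)
            MeasurableSpace.pi]) ω) ^ 2 ∂(Measure.pi ν) := by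
  set μ := Measure.pi ν
  let e := Fintype.equivFin ι
  let ℱ := piRankLT (α := α) fun j => (e j : ℕ)
  have hlast : μ[F | ℱ (Fintype.card ι)] =ᵐ[μ] F := by
    rw [piRankLT_of_forall_lt fun j => (e j).2]
    exact condExp_of_aestronglyMeasurable' le_rfl hF2.aestronglyMeasurable
      (hF2.integrable one_le_two)
  have hfirst : Var[μ[F | ℱ 0]; μ] = 0 := by
    rw [piRankLT_zero, condExp_bot', variance_eq_integral measurable_const.aemeasurable]
    simp
  have hstep (i : ι) : ∫ ω, (μ[F | ℱ (e i + 1)] ω - μ[F | ℱ (e i)] ω) ^ 2 ∂μ ≤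
      ∫ ω, (F ω - μ[F | cylinderEvents {j | j ≠ i}] ω) ^ 2 ∂μ :=
    integral_sq_condExp_sub_le hF2 (condExp_condExp_piRankLT ν
      (Fin.val_injective.comp e.injective) i (hF2.integrable one_le_two))
  calc Var[F; μ] = Var[μ[F | ℱ (Fintype.card ι)]; μ] := (variance_congr hlast).symm
    _ = ∑ k ∈ Finset.range (Fintype.card ι),
          ∫ ω, (μ[F | ℱ (k + 1)] ω - μ[F | ℱ k] ω) ^ 2 ∂μ := by
        rw [variance_condExp_eq_add_sum ℱ hF2, hfirst, zero_add]
    _ = ∑ i, ∫ ω, (μ[F | ℱ (e i + 1)] ω - μ[F | ℱ (e i)] ω) ^ 2 ∂μ :=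
        (Fin.sum_univ_eq_sum_range _ _).symm.trans (e.sum_comp _).symm
    _ ≤ _ := Finset.sum_le_sum fun i _ => hstep i
    _ = _ := by simp_rw [comap_restrict_eq_cylinderEvents]

/-- Efron–Stein inequality: for independent coordinates (product probability measure)
and a square-integrable function `F`,
`Var[F] ≤ ∑_i E[Var[F | (X_j)_{j ≠ i}]] = ∑_i E[(F − E[F | (X_j)_{j ≠ i}])²]`. -/
theorem stmt17 {ι : Type*} [Fintype ι] {α : ι → Type*} [∀ i, MeasurableSpace (α i)]
    (ν : ∀ i, Measure (α i)) [∀ i, IsProbabilityMeasure (ν i)]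
    (F : (∀ i, α i) → ℝ) (hF : Measurable F) (hF2 : MemLp F 2 (Measure.pi ν)) :
    variance F (Measure.pi ν) ≤
      ∑ i : ι, ∫ ω,
        (F ω - ((Measure.pi ν)[F |
          MeasurableSpace.comap
            (fun (ω' : ∀ j, α j) (j : {j : ι // j ≠ i}) => ω' j.1)
            MeasurableSpace.pi]) ω) ^ 2 ∂(Measure.pi ν) :=
  stmt17_general ν F hF2
end
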